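/- arXiv:1610.04588 — 9 statements merged into one kernel-verified Lean document; each statement's English description precedes it below -/
import Mathlib

section
/- There is a unique p₀ in (1/2, 1) such that (p₀/(4p₀-2))·ln(p₀/(1-p₀)) = 1; moreover p₀ lies in the interval (0.83, 0.84). -/
/-!
Clearing the positive denominator `4p - 2`, the equation becomes `g p = 0` with
`g p = p log (p / (1 - p)) - (4p - 2)`. The derivative `log (p / (1 - p)) + 1 / (1 - p) - 4` is
increasing on `(0, 1)`, so `g` is strictly convex there; since `g (1/2) = 0`, it has at most one
other zero. Elementary bounds on `exp` give `g 0.83 < 0 < g 0.84`, and the intermediate value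
theorem places that zero in `(0.83, 0.84)`.
-/

open Real Set

theorem StrictConvexOn.eq_of_apply_eq_of_ne {𝕜 : Type*} [Field 𝕜] [LinearOrder 𝕜]
    [IsStrictOrderedRing 𝕜] {s : Set 𝕜} {f : 𝕜 → 𝕜} (hf : StrictConvexOn 𝕜 s f)
    {a x y : 𝕜} (ha : a ∈ s) (hx : x ∈ s) (hy : y ∈ s) (hxa : x ≠ a) (hya : y ≠ a)
    (hfx : f x = f a) (hfy : f y = f a) : x = y := by
  by_contra hxy
  rcases lt_or_gt_of_ne hxy with hlt | hlt
  · simpa [hfx, hfy] using hf.secant_strict_mono ha hx hy hxa hya hlt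
  · simpa [hfx, hfy] using hf.secant_strict_mono ha hy hx hya hxa hlt

/-- `(4p - 2) (α p - 1)`. -/
noncomputable def alphaGap (p : ℝ) : ℝ := p * log (p / (1 - p)) - (4 * p - 2)

theorem alpha_eq_one_iff_alphaGap_eq_zero {p : ℝ} (hp : 1 / 2 < p) :
    p / (4 * p - 2) * log (p / (1 - p)) = 1 ↔ alphaGap p = 0 := by
  rw [div_mul_eq_mul_div, div_eq_one_iff_eq (by linarith), alphaGap, sub_eq_zero]

theorem alphaGap_half : alphaGap (1 / 2) = 0 := by
  norm_num [alphaGap]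

theorem hasDerivAt_alphaGap {p : ℝ} (hp₀ : p ≠ 0) (hp₁ : p ≠ 1) :
    HasDerivAt alphaGap (log (p / (1 - p)) + 1 / (1 - p) - 4) p := by
  have hq : 1 - p ≠ 0 := sub_ne_zero.2 hp₁.symm
  have hodds : HasDerivAt (fun x : ℝ => x / (1 - x)) (1 / (1 - p) ^ 2) p := by
    refine ((hasDerivAt_id' p).div
      ((hasDerivAt_const p 1).sub (hasDerivAt_id' p)) hq).congr_deriv ?_
    simp only [Pi.sub_apply]
    field_simp
    ring
  refine (((hasDerivAt_id' p).mul (hodds.log (div_ne_zero hp₀ hq))).sub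
    (((hasDerivAt_id' p).const_mul 4).sub_const 2)).congr_deriv ?_
  field_simp

theorem continuousOn_alphaGap : ContinuousOn alphaGap (Ioo 0 1) := fun _ hp =>
  (hasDerivAt_alphaGap hp.1.ne' hp.2.ne).continuousAt.continuousWithinAt

theorem strictMonoOn_deriv_alphaGap : StrictMonoOn (deriv alphaGap) (Ioo 0 1) := by
  intro x hx y hy hxy
  rw [(hasDerivAt_alphaGap hx.1.ne' hx.2.ne).deriv, (hasDerivAt_alphaGap hy.1.ne' hy.2.ne).deriv]
  have hx' : 0 < 1 - x := by linarith [hx.2]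
  have hy' : 0 < 1 - y := by linarith [hy.2]
  have hodds : x / (1 - x) < y / (1 - y) := by
    rw [div_lt_div_iff₀ hx' hy']
    nlinarith
  have hlog := log_lt_log (div_pos hx.1 hx') hodds
  have hinv : 1 / (1 - x) < 1 / (1 - y) := one_div_lt_one_div_of_lt hy' (by linarith)
  linarith

theorem strictConvexOn_alphaGap : StrictConvexOn ℝ (Ioo 0 1) alphaGap :=
  StrictMonoOn.strictConvexOn_of_deriv (convex_Ioo 0 1) continuousOn_alphaGap
    (by rw [interior_Ioo]; exact strictMonoOn_deriv_alphaGap)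

theorem log_83_div_17_lt : log (83 / 17) < 132 / 83 := by
  rw [log_lt_iff_lt_exp (by norm_num)]
  calc (83 / 17 : ℝ) < ∑ i ∈ Finset.range 8, (132 / 83 : ℝ) ^ i / i.factorial := by
        norm_num [Finset.sum_range_succ, Nat.factorial]
    _ ≤ exp (132 / 83) := sum_le_exp_of_nonneg (by norm_num) 8

theorem lt_log_21_div_4 : 34 / 21 < log (21 / 4) := by
  rw [lt_log_iff_exp_lt (by norm_num)]
  calc exp (34 / 21) = exp (17 / 42) ^ 4 := by rw [← exp_nat_mul]; norm_num
    _ < ((2 + 17 / 42) / (2 - 17 / 42)) ^ 4 := by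
        gcongr
        exact exp_lt_two_add_div_two_sub (by norm_num) (by norm_num)
    _ < 21 / 4 := by norm_num

theorem alphaGap_83_neg : alphaGap 0.83 < 0 := by
  have hodds : (0.83 : ℝ) / (1 - 0.83) = 83 / 17 := by norm_num
  rw [alphaGap, hodds]
  linarith [log_83_div_17_lt]

theorem alphaGap_84_pos : 0 < alphaGap 0.84 := by
  have hodds : (0.84 : ℝ) / (1 - 0.84) = 21 / 4 := by norm_num
  rw [alphaGap, hodds]
  linarith [lt_log_21_div_4]

theorem exists_unique_p0 :
    ∃ p₀ : ℝ, p₀ ∈ Set.Ioo (1/2 : ℝ) 1 ∧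
      p₀ / (4 * p₀ - 2) * Real.log (p₀ / (1 - p₀)) = 1 ∧
      p₀ ∈ Set.Ioo (0.83 : ℝ) 0.84 ∧
      ∀ p ∈ Set.Ioo (1/2 : ℝ) 1,
        p / (4 * p - 2) * Real.log (p / (1 - p)) = 1 → p = p₀ := by
  have hcont : ContinuousOn alphaGap (Icc 0.83 0.84) :=
    continuousOn_alphaGap.mono (Icc_subset_Ioo (by norm_num) (by norm_num))
  obtain ⟨p₀, hp₀, hzero⟩ :=
    intermediate_value_Ioo (by norm_num) hcont ⟨alphaGap_83_neg, alphaGap_84_pos⟩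
  have hmem : p₀ ∈ Ioo (1 / 2 : ℝ) 1 := by
    constructor <;> linarith [hp₀.1, hp₀.2]
  have hunit : Ioo (1 / 2 : ℝ) 1 ⊆ Ioo 0 1 := Ioo_subset_Ioo_left (by norm_num)
  refine ⟨p₀, hmem, (alpha_eq_one_iff_alphaGap_eq_zero hmem.1).2 hzero, hp₀,
    fun p hp hp₁ => ?_⟩
  rw [alpha_eq_one_iff_alphaGap_eq_zero hp.1] at hp₁
  exact strictConvexOn_alphaGap.eq_of_apply_eq_of_ne (by norm_num) (hunit hp) (hunit hmem)
    hp.1.ne' hmem.1.ne' (by rw [hp₁, alphaGap_half]) (by rw [hzero, alphaGap_half])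
end

section
/- If 1/2 < p < 1 is such that α = (p/(4p-2))·ln(p/(1-p)) > 1, and ζ ∈ (0,1) is the solution distinct from 1 of ζ·e^{α(1-ζ)} = 1, then η := -ln γ / ln ζ > 2, where γ = p/(1-p). -/
/-!
Taking logarithms, `log ζ = -α (1 - ζ)`, so `η = log γ / (α (1 - ζ))`, and the choice of `α` gives
`α (1 - γ⁻¹) = log γ / 2`. Hence `η > 2` amounts to `γ⁻¹ < ζ`. This holds because the concave
function `x ↦ log x + α (1 - x)` vanishes at `ζ` and at `1` but equals `-log γ / 2 < 0` at `γ⁻¹ < 1`.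
-/

open Real Set

lemma ConcaveOn.lt_of_neg_of_nonneg {𝕜 β : Type*} [Field 𝕜] [LinearOrder 𝕜] [IsStrictOrderedRing 𝕜]
    [AddCommGroup β] [LinearOrder β] [IsOrderedAddMonoid β] [Module 𝕜 β]
    [IsStrictOrderedModule 𝕜 β] {s : Set 𝕜} {f : 𝕜 → β} (hf : ConcaveOn 𝕜 s f) {a b x : 𝕜}
    (ha : a ∈ s) (hb : b ∈ s) (hfa : 0 ≤ f a) (hfb : 0 ≤ f b) (hxb : x ≤ b) (hfx : f x < 0) :
    x < a := by
  by_contra! hax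
  exact hfx.not_ge ((le_min hfa hfb).trans (hf.min_le_of_mem_Icc ha hb ⟨hax, hxb⟩))

lemma concaveOn_log_add_mul_one_sub (α : ℝ) :
    ConcaveOn ℝ (Ioi 0) fun x ↦ log x + α * (1 - x) := by
  have haff : ConcaveOn ℝ (Ioi 0) fun x ↦ α * (1 - x) :=
    ⟨convex_Ioi 0, fun x _ y _ a b _ _ hab ↦ le_of_eq <| by
      simp only [smul_eq_mul]
      linear_combination α * hab⟩
  exact strictConcaveOn_log_Ioi.concaveOn.add haff

lemma log_eq_of_mul_exp_eq_one {α ζ : ℝ} (hζ : 0 < ζ) (h : ζ * exp (α * (1 - ζ)) = 1) :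
    log ζ = -(α * (1 - ζ)) := by
  have := congrArg log h
  rw [log_mul hζ.ne' (exp_ne_zero _), log_exp, log_one] at this
  linarith

lemma inv_lt_of_mul_exp_eq_one {α γ ζ : ℝ} (hγ : 1 < γ) (hαγ : α * (1 - γ⁻¹) < log γ)
    (hζ : 0 < ζ) (h : ζ * exp (α * (1 - ζ)) = 1) : γ⁻¹ < ζ := by
  refine (concaveOn_log_add_mul_one_sub α).lt_of_neg_of_nonneg (mem_Ioi.2 hζ)
    (mem_Ioi.2 one_pos) ?_ ?_ (inv_le_one_of_one_le₀ hγ.le) ?_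
  · simp [log_eq_of_mul_exp_eq_one hζ h]
  · simp
  · simp only [log_inv]
    linarith

theorem eta_gt_two_general (p γ α ζ η : ℝ)
    (hp : p ∈ Set.Ioo (1/2 : ℝ) 1)
    (hγ : γ = p / (1 - p))
    (hα : α = p / (4 * p - 2) * Real.log γ)
    (hζ : ζ ∈ Set.Ioo (0 : ℝ) 1)
    (hζeq : ζ * Real.exp (α * (1 - ζ)) = 1)
    (hη : η = - Real.log γ / Real.log ζ) :
    2 < η := by
  obtain ⟨hp₁, hp₂⟩ := hp
  obtain ⟨hζ₀, hζ₁⟩ := hζ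
  have hγ₁ : 1 < γ := by
    rw [hγ, lt_div_iff₀ (by linarith)]
    linarith
  have hlogγ : 0 < log γ := log_pos hγ₁
  have hα₀ : 0 < α := by
    rw [hα]
    exact mul_pos (div_pos (by linarith) (by linarith)) hlogγ
  have hhalf : α * (1 - γ⁻¹) = log γ / 2 := by
    have hcoef : p / (4 * p - 2) * (1 - (1 - p) / p) = 1 / 2 := by
      rw [one_sub_div (by linarith), div_mul_div_comm,
        div_eq_div_iff (mul_ne_zero (by linarith) (by linarith)) two_ne_zero]
      ring
    rw [hα, hγ, inv_div]
    linear_combination log (p / (1 - p)) * hcoef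
  have hkey : γ⁻¹ < ζ := inv_lt_of_mul_exp_eq_one hγ₁ (by linarith) hζ₀ hζeq
  have hpos : 0 < α * (1 - ζ) := mul_pos hα₀ (by linarith)
  rw [hη, log_eq_of_mul_exp_eq_one hζ₀ hζeq, neg_div_neg_eq, lt_div_iff₀ hpos]
  linarith [mul_lt_mul_of_pos_left hkey hα₀]

theorem eta_gt_two (p γ α ζ η : ℝ)
    (hp : p ∈ Set.Ioo (1/2 : ℝ) 1)
    (hγ : γ = p / (1 - p))
    (hα : α = p / (4 * p - 2) * Real.log γ)
    (hα1 : 1 < α)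
    (hζ : ζ ∈ Set.Ioo (0 : ℝ) 1)
    (hζeq : ζ * Real.exp (α * (1 - ζ)) = 1)
    (hη : η = - Real.log γ / Real.log ζ) :
    2 < η :=
  eta_gt_two_general p γ α ζ η hp hγ hα hζ hζeq hη
end

section
/- With b_k = (-α)^k a_k, where a_0 = 1 and a_k = -(e^α/α)·Σ_{j=0}^{k-1} a_j/(k-j-1)!, the generating function of (b_k) equals B(z) = 1/(1 - z·e^{α(1-z)}). -/
/-!
Multiplying the recurrence for `a k` by `(-α) ^ k` turns it into the convolution identity
`b (n + 1) = e^α · ∑_{k ≤ n} b k · (-α) ^ (n - k) / (n - k)!`, which is the coefficientwise form of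
`B = 1 + X · B · e^α · exp(-α X)`.
-/

open Finset PowerSeries

namespace PowerSeries

theorem mul_one_sub_X_mul_eq_one {R : Type*} [CommRing R] {f g : R⟦X⟧}
    (h0 : constantCoeff f = 1) (hsucc : ∀ n, coeff (n + 1) f = coeff n (f * g)) :
    f * (1 - X * g) = 1 := by
  ext (_ | n)
  · simp [h0]
  · rw [mul_sub, mul_one, mul_left_comm, map_sub, coeff_succ_X_mul, hsucc, coeff_one]
    simp

theorem coeff_rescale_exp {K : Type*} [Field K] [CharZero K] (c : K) (n : ℕ) :
    coeff n (rescale c (exp K)) = c ^ n / n.factorial := by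
  rw [coeff_rescale, coeff_exp]
  push_cast
  ring

end PowerSeries

theorem succ_eq_convolution_of_recurrence {K : Type*} [Field K] {α c : K} (hα : α ≠ 0)
    {a b : ℕ → K} (hb : ∀ k, b k = (-α) ^ k * a k) (n : ℕ)
    (ha : a (n + 1) = -(c / α) * ∑ j ∈ range (n + 1), a j / (n + 1 - j - 1).factorial) :
    b (n + 1) = c * ∑ k ∈ range (n + 1), b k * ((-α) ^ (n - k) / (n - k).factorial) := by
  rw [hb, ha, mul_sum, mul_sum, mul_sum]
  refine sum_congr rfl fun k hk => ?_
  have hkn : k + (n - k) = n := Nat.add_sub_cancel' (Nat.lt_succ_iff.mp (mem_range.mp hk))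
  have hpow : (-α) ^ (n + 1) = (-α) ^ k * (-α) ^ (n - k) * (-α) := by rw [← pow_add, hkn, pow_succ]
  rw [hb, hpow, Nat.sub_right_comm, Nat.add_sub_cancel]
  field_simp

theorem generating_function_b (α : ℝ) (hα : 0 < α) (a b : ℕ → ℝ)
    (ha0 : a 0 = 1)
    (ha : ∀ k : ℕ, 1 ≤ k →
      a k = -(Real.exp α / α) * ∑ j ∈ Finset.range k, a j / (Nat.factorial (k - j - 1)))
    (hb : ∀ k, b k = (-α) ^ k * a k) :
    PowerSeries.mk b *
      (1 - PowerSeries.C (R := ℝ) (Real.exp α) * PowerSeries.X *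
        PowerSeries.rescale (-α) (PowerSeries.exp ℝ)) = 1 := by
  rw [mul_comm (C _) X, mul_assoc]
  refine mul_one_sub_X_mul_eq_one (by simp [hb, ha0]) fun n => ?_
  rw [coeff_mk, mul_left_comm, coeff_C_mul, coeff_mul, Nat.sum_antidiagonal_eq_sum_range_succ_mk]
  simp only [coeff_mk, coeff_rescale_exp]
  exact succ_eq_convolution_of_recurrence hα.ne' hb n (ha (n + 1) n.succ_pos)
end

section
/- Let Q be defined piecewise by Q(τ) = Σ_{j=0}^{k} (a_j/(k-j)!)·(τ-k)^{k-j} for τ ∈ [k, k+1), where a_0 = 1 and a_k = -(e^α/α)·Σ_{j=0}^{k-1} a_j/(k-j-1)!, with Q(τ) = 0 for τ < 0. Then for every non-integer τ > 0, Q is differentiable at τ with Q'(τ) = Q(τ-1). -/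
/-!
On `[k, k + 1)` the function `Q` is `p_k (τ - k)` with `p_k = appellSum a k`, and these polynomials form
an Appell sequence: `p_(k+1)' = p_k` and `p_0` is constant. At a non-integer `τ ∈ (k, k + 1)` this gives
`Q'(τ) = p_(k-1) (τ - k)`, which is `Q (τ - 1)` read off `[k - 1, k)`; for `k = 0` both sides vanish
since `Q = 0` on the negative axis.
-/

open Finset

noncomputable def appellSum (a : ℕ → ℝ) (k : ℕ) (x : ℝ) : ℝ :=
  ∑ j ∈ range (k + 1), a j / (Nat.factorial (k - j)) * x ^ (k - j)

lemma hasDerivAt_pow_succ_div_factorial (n : ℕ) (x : ℝ) :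
    HasDerivAt (fun y : ℝ => y ^ (n + 1) / (n + 1).factorial) (x ^ n / n.factorial) x := by
  refine ((hasDerivAt_pow (n + 1) x).div_const _).congr_deriv ?_
  rw [Nat.factorial_succ]
  push_cast
  field_simp

lemma appellSum_succ_eq (a : ℕ → ℝ) (k : ℕ) :
    appellSum a (k + 1) =
      fun x => ∑ j ∈ range (k + 1), a j * (x ^ (k - j + 1) / (k - j + 1).factorial) + a (k + 1) := by
  ext x
  rw [appellSum, sum_range_succ, Nat.sub_self, Nat.factorial_zero, pow_zero, Nat.cast_one, div_one,
    mul_one]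
  congr 1
  refine sum_congr rfl fun j hj => ?_
  rw [Nat.sub_add_comm (mem_range_succ_iff.mp hj)]
  ring

lemma hasDerivAt_appellSum_succ (a : ℕ → ℝ) (k : ℕ) (x : ℝ) :
    HasDerivAt (appellSum a (k + 1)) (appellSum a k x) x := by
  rw [appellSum_succ_eq]
  refine (HasDerivAt.fun_sum fun j _ => ?_).add_const _
  exact ((hasDerivAt_pow_succ_div_factorial (k - j) x).const_mul (a j)).congr_deriv (by ring)

lemma hasDerivAt_appellSum_zero (a : ℕ → ℝ) (x : ℝ) : HasDerivAt (appellSum a 0) 0 x := by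
  have h : appellSum a 0 = fun _ => a 0 := by ext; simp [appellSum]
  exact h ▸ hasDerivAt_const x (a 0)

lemma exists_nat_lt_lt_add_one {τ : ℝ} (hτ : 0 ≤ τ) (hne : ∀ n : ℤ, τ ≠ n) :
    ∃ k : ℕ, (k : ℝ) < τ ∧ τ < k + 1 :=
  ⟨⌊τ⌋₊, (Nat.floor_le hτ).lt_of_ne fun h => hne ⌊τ⌋₊ (mod_cast h.symm),
    Nat.lt_floor_add_one τ⟩

theorem Q_deriv_general (a : ℕ → ℝ) (Q : ℝ → ℝ)
    (hQneg : ∀ τ : ℝ, τ < 0 → Q τ = 0)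
    (hQ : ∀ (k : ℕ) (τ : ℝ), (k : ℝ) ≤ τ → τ < k + 1 →
      Q τ = ∑ j ∈ Finset.range (k + 1), a j / (Nat.factorial (k - j)) * (τ - k) ^ (k - j)) :
    ∀ τ : ℝ, 0 < τ → (∀ n : ℤ, τ ≠ n) → HasDerivAt Q (Q (τ - 1)) τ := by
  intro τ hτ hne
  obtain ⟨k, hkτ, hτk⟩ := exists_nat_lt_lt_add_one hτ.le hne
  have hQ_piece : Q =ᶠ[nhds τ] fun x => appellSum a k (x - k) := by
    filter_upwards [Ioo_mem_nhds hkτ hτk] with x hx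
    exact hQ k x hx.1.le hx.2
  refine HasDerivAt.congr_of_eventuallyEq ?_ hQ_piece
  rcases k with _ | m
  · rw [hQneg _ (by push_cast at hτk; linarith)]
    exact (hasDerivAt_appellSum_zero a _).comp_sub_const τ _
  · push_cast at hkτ hτk ⊢
    rw [hQ m (τ - 1) (by linarith) (by linarith), show τ - 1 - m = τ - (m + 1) by ring]
    exact (hasDerivAt_appellSum_succ a m _).comp_sub_const τ _

theorem Q_deriv (α : ℝ) (hα : 0 < α) (a : ℕ → ℝ) (Q : ℝ → ℝ)
    (ha0 : a 0 = 1)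
    (ha : ∀ k : ℕ, 1 ≤ k →
      a k = -(Real.exp α / α) * ∑ j ∈ Finset.range k, a j / (Nat.factorial (k - j - 1)))
    (hQneg : ∀ τ : ℝ, τ < 0 → Q τ = 0)
    (hQ : ∀ (k : ℕ) (τ : ℝ), (k : ℝ) ≤ τ → τ < k + 1 →
      Q τ = ∑ j ∈ Finset.range (k + 1), a j / (Nat.factorial (k - j)) * (τ - k) ^ (k - j)) :
    ∀ τ : ℝ, 0 < τ → (∀ n : ℤ, τ ≠ n) → HasDerivAt Q (Q (τ - 1)) τ :=
  Q_deriv_general a Q hQneg hQ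
end

section
/- With Q as defined and a_k the associated sequence, at every integer k ≥ 1 the one-sided limits satisfy Q(k) = a_k and lim_{τ→k⁻} Q(τ) = -α·e^{-α}·a_k. -/
open Filter Finset Set Topology

/-- The polynomial that `Q` coincides with on `[k, k + 1)`. -/
noncomputable def piece {𝕜 : Type*} [Field 𝕜] (a : ℕ → 𝕜) (k : ℕ) (τ : 𝕜) : 𝕜 :=
  ∑ j ∈ range (k + 1), a j / (k - j).factorial * (τ - k) ^ (k - j)

section Field

variable {𝕜 : Type*} [Field 𝕜] (a : ℕ → 𝕜) (k : ℕ)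

theorem piece_self : piece a k k = a k := by
  rw [piece, sum_eq_single_of_mem k (self_mem_range_succ k)]
  · simp
  · intro j hj hjk
    have hjk : j < k := lt_of_le_of_ne (Nat.lt_succ_iff.mp (mem_range.mp hj)) hjk
    rw [sub_self, zero_pow (Nat.sub_ne_zero_of_lt hjk), mul_zero]

theorem piece_succ_self :
    piece a k (k + 1) = ∑ j ∈ range (k + 1), a j / (k - j).factorial := by
  simp [piece]

end Field

theorem continuous_piece (a : ℕ → ℝ) (k : ℕ) : Continuous (piece a k) := by
  unfold piece
  fun_prop

theorem tendsto_nhdsLT_of_eqOn_Ico {Q f : ℝ → ℝ} {b c : ℝ} (hcb : c < b) (hf : Continuous f)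
    (hQf : EqOn Q f (Ico c b)) : Tendsto Q (𝓝[<] b) (𝓝 (f b)) := by
  have hQf_near : Q =ᶠ[𝓝[<] b] f :=
    mem_of_superset (Ioo_mem_nhdsLT hcb) fun τ hτ => hQf (Ioo_subset_Ico_self hτ)
  exact ((hf.tendsto b).mono_left nhdsWithin_le_nhds).congr' hQf_near.symm

theorem Q_jumps_general (α : ℝ) (hα : 0 < α) (a : ℕ → ℝ) (Q : ℝ → ℝ)
    (ha : ∀ k : ℕ, 1 ≤ k →
      a k = -(Real.exp α / α) * ∑ j ∈ Finset.range k, a j / (Nat.factorial (k - j - 1)))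
    (hQ : ∀ (k : ℕ) (τ : ℝ), (k : ℝ) ≤ τ → τ < k + 1 →
      Q τ = ∑ j ∈ Finset.range (k + 1), a j / (Nat.factorial (k - j)) * (τ - k) ^ (k - j)) :
    ∀ k : ℕ, 1 ≤ k → Q k = a k ∧
      Filter.Tendsto Q (nhdsWithin (k : ℝ) (Set.Iio (k : ℝ)))
        (nhds (-α * Real.exp (-α) * a k)) := by
  intro k hk
  obtain ⟨m, rfl⟩ := Nat.exists_eq_add_of_le' hk
  have hQ_piece (n : ℕ) : EqOn Q (piece a n) (Ico n (n + 1)) := fun τ hτ => hQ n τ hτ.1 hτ.2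
  have h_end : piece a m (m + 1) = -α * Real.exp (-α) * a (m + 1) := by
    -- the sum in the recursion for `a (m + 1)` is the `m`-th piece evaluated at its right end
    have hsum : a (m + 1) = -(Real.exp α / α) * piece a m (m + 1) := by
      rw [ha (m + 1) le_add_self, piece_succ_self]
      congr 1
      exact sum_congr rfl fun j _ => by rw [Nat.sub_right_comm, Nat.add_sub_cancel]
    rw [hsum, Real.exp_neg]
    field_simp [hα.ne']
  refine ⟨?_, ?_⟩
  · rw [hQ_piece (m + 1) ⟨le_rfl, lt_add_one _⟩, piece_self]
  · rw [Nat.cast_succ, ← h_end]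
    exact tendsto_nhdsLT_of_eqOn_Ico (lt_add_one _) (continuous_piece a m) (hQ_piece m)

theorem Q_jumps (α : ℝ) (hα : 0 < α) (a : ℕ → ℝ) (Q : ℝ → ℝ)
    (ha0 : a 0 = 1)
    (ha : ∀ k : ℕ, 1 ≤ k →
      a k = -(Real.exp α / α) * ∑ j ∈ Finset.range k, a j / (Nat.factorial (k - j - 1)))
    (hQneg : ∀ τ : ℝ, τ < 0 → Q τ = 0)
    (hQ : ∀ (k : ℕ) (τ : ℝ), (k : ℝ) ≤ τ → τ < k + 1 →
      Q τ = ∑ j ∈ Finset.range (k + 1), a j / (Nat.factorial (k - j)) * (τ - k) ^ (k - j)) :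
    ∀ k : ℕ, 1 ≤ k → Q k = a k ∧
      Filter.Tendsto Q (nhdsWithin (k : ℝ) (Set.Iio (k : ℝ)))
        (nhds (-α * Real.exp (-α) * a k)) :=
  Q_jumps_general α hα a Q ha hQ
end

section
/- Let F(s,τ) = 1 + q(τ)(s-1)/(1 - s(1-p(τ))) where p(τ) = e^{-ατ} and q(τ) = 1 for 0 ≤ τ < 1. Then for 0 ≤ τ < 1 and s ∈ [0,1), F(s,τ) = s·exp(α·∫₀^τ (F(s,u) - 1) du), i.e. F(s,τ) = s·e^{-ατ}/(1 - s(1 - e^{-ατ})). -/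
theorem F_equation_small_tau (α : ℝ) (hα : 0 < α) (F : ℝ → ℝ → ℝ)
    (hF : ∀ s ∈ Set.Ico (0 : ℝ) 1, ∀ τ : ℝ, 0 ≤ τ → τ < 1 →
      F s τ = 1 + (s - 1) / (1 - s * (1 - Real.exp (-α * τ)))) :
    ∀ s ∈ Set.Ico (0 : ℝ) 1, ∀ τ : ℝ, 0 ≤ τ → τ < 1 →
      F s τ = s * Real.exp (α * ∫ u in (0 : ℝ)..τ, (F s u - 1)) ∧
      F s τ = s * Real.exp (-α * τ) / (1 - s * (1 - Real.exp (-α * τ))) := by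
  intro s hs τ hτ0 hτ1
  obtain ⟨hs0, hs1⟩ := hs
  set D : ℝ → ℝ := fun u => 1 - s * (1 - Real.exp (-α * u)) with hDdef
  have hDpos : ∀ u : ℝ, 0 < D u := by
    intro u
    have he : 0 < Real.exp (-α * u) := Real.exp_pos _
    have := mul_nonneg hs0 he.le
    simp only [hDdef]
    nlinarith
  have hDcont : Continuous D := by
    simp only [hDdef]
    continuity
  -- derivative of D
  have hDer : ∀ u : ℝ, HasDerivAt D (-(α * s * Real.exp (-α * u))) u := by
    intro u
    have h1 : HasDerivAt (fun u : ℝ => -α * u) (-α) u := by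
      simpa using (hasDerivAt_id u).const_mul (-α)
    have h2 : HasDerivAt (fun u : ℝ => Real.exp (-α * u))
        (Real.exp (-α * u) * (-α)) u := (Real.hasDerivAt_exp (-α * u)).comp u h1
    have h3 : HasDerivAt (fun u : ℝ => 1 - s * (1 - Real.exp (-α * u)))
        (-(s * (0 - Real.exp (-α * u) * (-α)))) u := by
      exact (((hasDerivAt_const u (1:ℝ)).sub h2).const_mul s).const_sub 1
    convert h3 using 1
    ring
  -- antiderivative g
  set g : ℝ → ℝ := fun u => -(u + Real.log (D u) / α) with hgdef
  have hg : ∀ u : ℝ, HasDerivAt g ((s - 1) / D u) u := by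
    intro u
    have hlog : HasDerivAt (fun u => Real.log (D u))
        (-(α * s * Real.exp (-α * u)) / D u) u := (hDer u).log (hDpos u).ne'
    have h4 : HasDerivAt g (-(1 + (-(α * s * Real.exp (-α * u)) / D u) / α)) u := by
      exact ((hasDerivAt_id u).add (hlog.div_const α)).neg
    convert h4 using 1
    have hD := (hDpos u).ne'
    field_simp
    simp only [hDdef]
    ring
  -- rewrite the integrand
  have hIeq : (∫ u in (0:ℝ)..τ, (F s u - 1)) = ∫ u in (0:ℝ)..τ, (s - 1) / D u := by
    apply intervalIntegral.integral_congr
    intro u hu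
    rw [Set.uIcc_of_le hτ0] at hu
    have hu1 : u < 1 := lt_of_le_of_lt hu.2 hτ1
    show F s u - 1 = (s - 1) / D u
    rw [hF s ⟨hs0, hs1⟩ u hu.1 hu1]
    ring
  have hint : IntervalIntegrable (fun u => (s - 1) / D u) MeasureTheory.volume 0 τ := by
    apply Continuous.intervalIntegrable
    exact continuous_const.div hDcont (fun u => (hDpos u).ne')
  have hIval : (∫ u in (0:ℝ)..τ, (s - 1) / D u) = g τ - g 0 :=
    intervalIntegral.integral_eq_sub_of_hasDerivAt (fun u _ => hg u) hint
  have hg0 : g 0 = 0 := by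
    simp [hgdef, hDdef]
  have hDτ : D τ = 1 - s * (1 - Real.exp (-α * τ)) := rfl
  have hexpI : Real.exp (α * ∫ u in (0:ℝ)..τ, (F s u - 1)) =
      Real.exp (-α * τ) / D τ := by
    rw [hIeq, hIval, hg0, hgdef]
    have : α * -(τ + Real.log (D τ) / α) - 0 * α = -α * τ - Real.log (D τ) := by
      field_simp
      ring
    simp only [sub_zero]
    rw [show α * -(τ + Real.log (D τ) / α) = -α * τ - Real.log (D τ) by
      field_simp; ring]
    rw [Real.exp_sub, Real.exp_log (hDpos τ)]
  have hclosed : F s τ = s * Real.exp (-α * τ) / (1 - s * (1 - Real.exp (-α * τ))) := by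
    rw [hF s ⟨hs0, hs1⟩ τ hτ0 hτ1]
    have hD := (hDpos τ).ne'
    rw [← hDτ]
    field_simp
    simp only [hDdef]
    ring
  refine ⟨?_, hclosed⟩
  rw [hexpI, hclosed, hDτ]
  ring
end

section
/- Let q : [0,∞) → [0,1] be integrable and define p(τ) = exp(-α∫₀^τ q(x)dx). Suppose q satisfies 1 - q(τ) = p(τ)/p(τ-1) for all τ > 1 (with p(u)=1 for u<0 interpreted appropriately). Then F(s,τ) = 1 + q(τ)(s-1)/(1-s+s·p(τ)) satisfies F(s,τ) = exp(α∫_{τ-1}^τ (F(s,u)-1) du) for all τ > 1 and s ∈ [0,1). -/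
/-!
Write `I τ = ∫₀^τ q`, so `p = exp (-α I)`, and let `Φ t = -α t - log (1 - s + s e^{-α t})`
(`logRatioPotential α s`). Then `α (F s u - 1) = Φ' (I u) · q u` and
`exp (Φ (I τ)) = p τ / (1 - s + s p τ)`. The primitive `I` is absolutely continuous and `Φ` is
Lipschitz (as `|Φ'| ≤ |α|` for `0 ≤ s ≤ 1`), so `Φ ∘ I` is absolutely continuous with a.e.
derivative `Φ' (I u) · q u`; integrating gives
`α ∫_{τ-1}^τ (F s u - 1) = Φ (I τ) - Φ (I (τ - 1))`. After exponentiating, the delay relation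
`q τ = 1 - p τ / p (τ - 1)` turns the quotient
`(p τ / (1 - s + s p τ)) / (p (τ - 1) / (1 - s + s p (τ - 1)))` into `F s τ`.
-/

open MeasureTheory intervalIntegral Real
open scoped NNReal

theorem LipschitzWith.comp_absolutelyContinuousOnInterval {X Y : Type*} [PseudoMetricSpace X]
    [PseudoMetricSpace Y] {φ : X → Y} {K : ℝ≥0} (hφ : LipschitzWith K φ) {f : ℝ → X} {a b : ℝ}
    (hf : AbsolutelyContinuousOnInterval f a b) : AbsolutelyContinuousOnInterval (φ ∘ f) a b := by
  unfold AbsolutelyContinuousOnInterval at hf ⊢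
  refine squeeze_zero (fun _ ↦ Finset.sum_nonneg fun _ _ ↦ dist_nonneg) (fun E ↦ ?_)
    (by simpa using hf.const_mul (K : ℝ))
  rw [Finset.mul_sum]
  exact Finset.sum_le_sum fun i _ ↦ hφ.dist_le_mul _ _

theorem locallyIntegrable_of_forall_intervalIntegrable {E : Type*} [NormedAddCommGroup E]
    {f : ℝ → E}
    (hf : ∀ a b, IntervalIntegrable f volume a b) : LocallyIntegrable f :=
  fun x ↦ ⟨Set.Icc (x - 1) (x + 1), Icc_mem_nhds (by linarith) (by linarith),
    (intervalIntegrable_iff_integrableOn_Icc_of_le (by linarith)).mp (hf _ _)⟩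

theorem absolutelyContinuousOnInterval_intervalIntegral {f : ℝ → ℝ}
    (hf : ∀ a b, IntervalIntegrable f volume a b) (c a b : ℝ) :
    AbsolutelyContinuousOnInterval (fun u ↦ ∫ x in c..u, f x) a b := by
  have hsplit : (fun u ↦ ∫ x in c..u, f x) = fun u ↦ (∫ x in c..a, f x) + ∫ x in a..u, f x :=
    funext fun u ↦ (integral_add_adjacent_intervals (hf c a) (hf a u)).symm
  rw [hsplit]
  exact (LipschitzWith.const _).lipschitzOnWith.absolutelyContinuousOnInterval.add
    ((hf a b).absolutelyContinuousOnInterval_intervalIntegral Set.left_mem_uIcc)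

theorem integral_comp_primitive_mul_eq_sub {f φ ψ : ℝ → ℝ} {K : ℝ≥0}
    (hf : ∀ a b, IntervalIntegrable f volume a b) (hφ : ∀ t, HasDerivAt φ (ψ t) t)
    (hφK : LipschitzWith K φ) (c a b : ℝ) :
    ∫ u in a..b, ψ (∫ x in c..u, f x) * f u = φ (∫ x in c..b, f x) - φ (∫ x in c..a, f x) := by
  have hcomp := hφK.comp_absolutelyContinuousOnInterval
    (absolutelyContinuousOnInterval_intervalIntegral hf c a b)
  refine (intervalIntegral.integral_congr_ae ?_).trans hcomp.integral_deriv_eq_sub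
  filter_upwards [LocallyIntegrable.ae_hasDerivAt_integral
    (locallyIntegrable_of_forall_intervalIntegrable hf)] with u hu _
  exact ((hφ _).comp u (hu c)).deriv.symm

noncomputable def logRatioPotential (α s t : ℝ) : ℝ :=
  -(α * t) - log (1 - s + s * exp (-(α * t)))

section logRatioPotential

variable {α s : ℝ}

theorem one_sub_add_mul_pos (hs : s ∈ Set.Icc (0 : ℝ) 1) {P : ℝ} (hP : 0 < P) :
    0 < 1 - s + s * P := by
  rcases hs.1.eq_or_lt with rfl | hs0
  · norm_num
  · nlinarith [mul_pos hs0 hP, hs.2]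

theorem hasDerivAt_logRatioPotential (hs : s ∈ Set.Icc (0 : ℝ) 1) (t : ℝ) :
    HasDerivAt (logRatioPotential α s) (α * (s - 1) / (1 - s + s * exp (-(α * t)))) t := by
  have hD := one_sub_add_mul_pos hs (exp_pos (-(α * t)))
  have hlin : HasDerivAt (fun t ↦ -(α * t)) (-α) t := by
    simpa using ((hasDerivAt_id t).const_mul α).fun_neg
  have hD' := ((hlin.exp).const_mul s).const_add (1 - s)
  refine (hlin.fun_sub (hD'.log hD.ne')).congr_deriv ?_
  field_simp
  ring

theorem lipschitzWith_logRatioPotential (hs : s ∈ Set.Icc (0 : ℝ) 1) :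
    LipschitzWith ‖α‖₊ (logRatioPotential α s) := by
  refine lipschitzWith_of_nnnorm_deriv_le
    (fun t ↦ (hasDerivAt_logRatioPotential hs t).differentiableAt) fun t ↦ ?_
  set D := 1 - s + s * exp (-(α * t))
  have hD : 0 < D := one_sub_add_mul_pos hs (exp_pos _)
  have hsD : 1 - s ≤ D := le_add_of_nonneg_right (mul_nonneg hs.1 (exp_pos _).le)
  rw [(hasDerivAt_logRatioPotential hs t).deriv, ← NNReal.coe_le_coe, coe_nnnorm, coe_nnnorm]
  calc ‖α * (s - 1) / D‖ = ‖α‖ * ((1 - s) / D) := by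
        rw [norm_div, norm_mul, norm_sub_rev, Real.norm_of_nonneg (sub_nonneg.2 hs.2),
          Real.norm_of_nonneg hD.le, mul_div_assoc]
    _ ≤ ‖α‖ := mul_le_of_le_one_right (norm_nonneg α) ((div_le_one hD).2 hsD)

theorem exp_logRatioPotential (hs : s ∈ Set.Icc (0 : ℝ) 1) (t : ℝ) :
    exp (logRatioPotential α s t) = exp (-(α * t)) / (1 - s + s * exp (-(α * t))) := by
  rw [logRatioPotential, exp_sub, exp_log (one_sub_add_mul_pos hs (exp_pos _))]

end logRatioPotential

theorem F_equation_large_tau_general (α : ℝ) (q p : ℝ → ℝ) (F : ℝ → ℝ → ℝ)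
    (hqint : ∀ a b : ℝ, IntervalIntegrable q MeasureTheory.volume a b)
    (hp : ∀ τ : ℝ, p τ = Real.exp (-(α * ∫ x in (0 : ℝ)..τ, q x)))
    (hpq : ∀ τ : ℝ, 1 < τ → 1 - q τ = p τ / p (τ - 1))
    (hF : ∀ s τ : ℝ, F s τ = 1 + q τ * (s - 1) / (1 - s + s * p τ)) :
    ∀ τ : ℝ, 1 < τ → ∀ s ∈ Set.Ico (0 : ℝ) 1,
      F s τ = Real.exp (α * ∫ u in (τ - 1)..τ, (F s u - 1)) := by
  intro τ hτ s hs
  have hs' : s ∈ Set.Icc (0 : ℝ) 1 := Set.Ico_subset_Icc_self hs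
  have hintegral : α * ∫ u in (τ - 1)..τ, (F s u - 1) =
      logRatioPotential α s (∫ x in (0 : ℝ)..τ, q x) -
        logRatioPotential α s (∫ x in (0 : ℝ)..(τ - 1), q x) := by
    rw [← intervalIntegral.integral_const_mul, ← integral_comp_primitive_mul_eq_sub hqint
      (hasDerivAt_logRatioPotential hs') (lipschitzWith_logRatioPotential hs')]
    congr 1 with u
    rw [hF, hp u]
    ring
  have hpτ : 0 < p τ := hp τ ▸ exp_pos _
  have hpτ' : 0 < p (τ - 1) := hp (τ - 1) ▸ exp_pos _
  have hqτ : q τ = 1 - p τ / p (τ - 1) := by linarith [hpq τ hτ]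
  have hDτ := one_sub_add_mul_pos hs' hpτ
  rw [hintegral, exp_sub, exp_logRatioPotential hs', exp_logRatioPotential hs', ← hp, ← hp, hF, hqτ,
    one_add_div hDτ.ne', div_div_div_eq, div_eq_div_iff hDτ.ne' (mul_ne_zero hDτ.ne' hpτ'.ne')]
  field_simp
  ring

theorem F_equation_large_tau (α : ℝ) (hα : 0 < α) (q p : ℝ → ℝ) (F : ℝ → ℝ → ℝ)
    (hq01 : ∀ x : ℝ, q x ∈ Set.Icc (0 : ℝ) 1)
    (hqneg : ∀ x : ℝ, x < 0 → q x = 0)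
    (hqint : ∀ a b : ℝ, IntervalIntegrable q MeasureTheory.volume a b)
    (hp : ∀ τ : ℝ, p τ = Real.exp (-(α * ∫ x in (0 : ℝ)..τ, q x)))
    (hpq : ∀ τ : ℝ, 1 < τ → 1 - q τ = p τ / p (τ - 1))
    (hF : ∀ s τ : ℝ, F s τ = 1 + q τ * (s - 1) / (1 - s + s * p τ)) :
    ∀ τ : ℝ, 1 < τ → ∀ s ∈ Set.Ico (0 : ℝ) 1,
      F s τ = Real.exp (α * ∫ u in (τ - 1)..τ, (F s u - 1)) :=
  F_equation_large_tau_general α q p F hqint hp hpq hF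
end

section
/- For α ≥ 1/2 and 0 ≤ τ₀ ≤ 1: (1/(e^α - ατ₀)) · ((e^α - ατ₀)/(e^{2α} - (τ₀+1)αe^α + α²τ₀²/2)) ≤ 1/(e - e^{1/2} + 1/8). Equivalently, e^{2α} - (τ₀+1)αe^α + α²τ₀²/2 ≥ e - e^{1/2} + 1/8. -/
set_option maxHeartbeats 1600000

theorem claimC_first_inequality (α τ₀ : ℝ) (hα : 1/2 ≤ α) (h0 : 0 ≤ τ₀) (h1 : τ₀ ≤ 1) :
    Real.exp 1 - Real.exp (1/2) + 1/8 ≤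
      Real.exp (2 * α) - (τ₀ + 1) * α * Real.exp α + α ^ 2 * τ₀ ^ 2 / 2 ∧
    (1 / (Real.exp α - α * τ₀)) *
      ((Real.exp α - α * τ₀) /
        (Real.exp (2 * α) - (τ₀ + 1) * α * Real.exp α + α ^ 2 * τ₀ ^ 2 / 2))
      ≤ 1 / (Real.exp 1 - Real.exp (1/2) + 1/8) := by
  have hse : Real.exp (1/2) ^ 2 = Real.exp 1 := by
    rw [sq, ← Real.exp_add]; norm_num
  set s := Real.exp (1/2) with hs
  clear_value s
  set E := Real.exp α with hE
  clear_value E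
  have hs0 : 0 < s := hs ▸ Real.exp_pos _
  have he1 : (2.7:ℝ) < Real.exp 1 := by linarith [Real.exp_one_gt_d9]
  have he2 : Real.exp 1 < 2.72 := by linarith [Real.exp_one_lt_d9]
  have hsub : (1.64 : ℝ) < s := by nlinarith [he1, hse, hs0]
  have hsup : s < 1.65 := by nlinarith [he2, hse, hs0]
  have hEsq : Real.exp (2 * α) = E ^ 2 := by
    rw [hE, sq, ← Real.exp_add]; ring_nf
  set t := α - 1/2 with htdef
  clear_value t
  have ht : 0 ≤ t := by simp [htdef]; linarith
  have hhalf : 1 + t/2 ≤ Real.exp (t/2) := by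
    have := Real.add_one_le_exp (t/2); linarith
  have hEdecomp : E = s * Real.exp (t/2) ^ 2 := by
    rw [hE, hs, sq, ← Real.exp_add, ← Real.exp_add]
    norm_num [htdef]
  have h01 : (0:ℝ) ≤ 1 + t/2 := by linarith
  have hElb : s * (1 + t/2) ^ 2 ≤ E := by
    rw [hEdecomp]
    exact mul_le_mul_of_nonneg_left (pow_le_pow_left₀ h01 hhalf 2) hs0.le
  have hEα : α + 1 ≤ E := by
    have := Real.add_one_le_exp α; linarith
  -- step 1: reduce to τ₀ = 1
  have hprod : 0 ≤ (1 - τ₀) * α * (E - α * (1 + τ₀) / 2) := by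
    apply mul_nonneg (mul_nonneg (by linarith) (by linarith))
    have h2 : α * (1 + τ₀) ≤ α * 2 :=
      mul_le_mul_of_nonneg_left (by linarith) (by linarith)
    linarith
  have hstep1 : E^2 - 2*α*E + α^2/2 ≤ E^2 - (τ₀+1)*α*E + α^2*τ₀^2/2 := by
    have hid : E^2 - (τ₀+1)*α*E + α^2*τ₀^2/2 - (E^2 - 2*α*E + α^2/2)
        = (1-τ₀)*α*(E - α*(1+τ₀)/2) := by ring
    linarith [hprod, hid]
  -- step 2: lower bound E - α by polynomial in t
  have hEmα : (s - 1/2) + (s-1)*t + s*t^2/4 ≤ E - α := by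
    have hexp : s*(1 + t/2)^2 - α = (s - 1/2) + (s-1)*t + s*t^2/4 := by
      rw [htdef]; ring
    linarith [hElb]
  have hLpos : (0:ℝ) < (s - 1/2) + (s-1)*t + s*t^2/4 := by
    have a1 : 0 ≤ (s-1)*t := mul_nonneg (by linarith) ht
    have a2 : 0 ≤ s*t^2 := mul_nonneg hs0.le (sq_nonneg t)
    nlinarith [a1, a2, hsub]
  have hsq : ((s - 1/2) + (s-1)*t + s*t^2/4)^2 ≤ (E - α)^2 :=
    pow_le_pow_left₀ hLpos.le hEmα 2
  -- step 3: polynomial inequality in s, t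
  have c1 : (0:ℝ) ≤ 2*(s-1/2)*(s-1) - 1/2 := by nlinarith [hsub]
  have c2 : (0:ℝ) ≤ (s-1)^2 + s*(s-1/2)/2 - 1/2 := by nlinarith [hsub]
  have c3 : (0:ℝ) ≤ s*(s-1)/2 := by nlinarith [hsub]
  have c4 : (0:ℝ) ≤ s^2/16 := by positivity
  have ht2 : (0:ℝ) ≤ t^2 := sq_nonneg t
  have ht3 : (0:ℝ) ≤ t^3 := by positivity
  have ht4 : (0:ℝ) ≤ t^4 := by positivity
  have hstep2 : (s - 1/2)^2 - 1/8 ≤ ((s - 1/2) + (s-1)*t + s*t^2/4)^2 - α^2/2 := by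
    have hα2 : α = t + 1/2 := by rw [htdef]; ring
    rw [hα2]
    have hid : ((s - 1/2) + (s-1)*t + s*t^2/4)^2 - (t+1/2)^2/2 - ((s - 1/2)^2 - 1/8)
        = t*(2*(s-1/2)*(s-1) - 1/2) + t^2*((s-1)^2 + s*(s-1/2)/2 - 1/2)
          + t^3*(s*(s-1)/2) + t^4*(s^2/16) := by ring
    linarith [mul_nonneg ht c1, mul_nonneg ht2 c2, mul_nonneg ht3 c3, mul_nonneg ht4 c4, hid]
  have key : Real.exp 1 - s + 1/8 ≤
      Real.exp (2 * α) - (τ₀ + 1) * α * E + α ^ 2 * τ₀ ^ 2 / 2 := by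
    rw [hEsq, ← hse]
    have e1 : E^2 - 2*α*E + α^2/2 = (E-α)^2 - α^2/2 := by ring
    have e2 : (s-1/2)^2 - 1/8 = s^2 - s + 1/8 := by ring
    linarith [hsq, hstep2, hstep1, e1, e2]
  refine ⟨key, ?_⟩
  have htpos : 0 < Real.exp 1 - s + 1/8 := by
    rw [← hse]
    have : (0:ℝ) ≤ (s - 1.64)*(s - 1) := mul_nonneg (by linarith) (by linarith)
    nlinarith [this]
  have hDpos : 0 < Real.exp (2 * α) - (τ₀ + 1) * α * E + α ^ 2 * τ₀ ^ 2 / 2 := by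
    linarith [key]
  have hApos : 0 < E - α * τ₀ := by
    have : α * τ₀ ≤ α := mul_le_of_le_one_right (by linarith) h1
    linarith
  have heq : (1 / (E - α * τ₀)) *
      ((E - α * τ₀) / (Real.exp (2 * α) - (τ₀ + 1) * α * E + α ^ 2 * τ₀ ^ 2 / 2))
      = 1 / (Real.exp (2 * α) - (τ₀ + 1) * α * E + α ^ 2 * τ₀ ^ 2 / 2) := by
    field_simp
  rw [heq]
  exact one_div_le_one_div_of_le htpos key
end

section
/- Consider a CMJ branching count where P_k(τ) denotes the expected number of generation-k processes born before time τ, satisfying P_0(τ) = 1 for τ ≥ 0, P_k(τ) = 0 for τ < 0, and P_k(τ) = α·E[P_{k-1}(τ - U)] for k ≥ 1 where U is uniform on [0,1]. Then P_k(τ) ≤ (ατ)^k / k! for all integers k ≥ 0 and all τ ≥ 0. -/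
/-! The bound is proved by induction on `k`. Since `P k` vanishes on negative times, the window
`u ∈ [0, 1]` in `∫₀¹ P k (τ - u) du` only sees `u ≤ τ`, so the integral is at most
`∫₀^τ (α t)^k / k! dt = α^k τ^(k+1) / (k+1)!`. -/

open intervalIntegral MeasureTheory Set

section

variable {f g : ℝ → ℝ} {a b τ : ℝ}

theorem integral_comp_sub_eq_integral_min_of_eq_zero_of_neg (hf : ∀ t < 0, f t = 0)
    (hb : 0 ≤ b) (hτ : 0 ≤ τ) :
    ∫ u in (0 : ℝ)..b, f (τ - u) = ∫ u in (0 : ℝ)..min b τ, f (τ - u) := by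
  rw [integral_of_le hb, integral_of_le (le_min hb hτ)]
  refine setIntegral_eq_of_subset_of_forall_sdiff_eq_zero measurableSet_Ioc
    (Ioc_subset_Ioc_right (min_le_left b τ)) fun u (hu : u ∈ Ioc 0 b \ Ioc 0 (min b τ)) => hf _ ?_
  have : τ < u := by
    by_contra! h
    exact hu.2 ⟨hu.1.1, le_min hu.1.2 h⟩
  linarith

/-- No integrability of `f` is needed: otherwise its integral is the junk value `0 ≤ ∫ g`. -/
theorem integral_le_integral_of_le_of_nonneg (hab : a ≤ b) (hg : IntervalIntegrable g volume a b)
    (hg0 : ∀ x ∈ Icc a b, 0 ≤ g x) (hfg : ∀ x ∈ Icc a b, f x ≤ g x) :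
    ∫ x in a..b, f x ≤ ∫ x in a..b, g x := by
  by_cases hf : IntervalIntegrable f volume a b
  · exact integral_mono_on hab hf hg hfg
  · rw [integral_undef hf]
    exact integral_nonneg hab hg0

theorem integral_comp_sub_le_of_eq_zero_of_neg (hf0 : ∀ t < 0, f t = 0)
    (hg : IntervalIntegrable g volume 0 τ) (hg0 : ∀ t ∈ Icc 0 τ, 0 ≤ g t)
    (hfg : ∀ t ∈ Icc 0 τ, f t ≤ g t) (hb : 0 ≤ b) (hτ : 0 ≤ τ) :
    ∫ u in (0 : ℝ)..b, f (τ - u) ≤ ∫ t in (0 : ℝ)..τ, g t := by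
  have hmem : ∀ u ∈ Icc 0 τ, τ - u ∈ Icc 0 τ := fun u ⟨hu0, huτ⟩ => ⟨by linarith, by linarith⟩
  have hgi : IntervalIntegrable (fun u => g (τ - u)) volume 0 τ := by
    simpa using (hg.comp_sub_left τ).symm
  have hm : min b τ ≤ τ := min_le_right _ _
  have hm0 : 0 ≤ min b τ := le_min hb hτ
  calc ∫ u in (0 : ℝ)..b, f (τ - u)
      = ∫ u in (0 : ℝ)..min b τ, f (τ - u) :=
        integral_comp_sub_eq_integral_min_of_eq_zero_of_neg hf0 hb hτ
    _ ≤ ∫ u in (0 : ℝ)..min b τ, g (τ - u) :=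
        integral_le_integral_of_le_of_nonneg hm0
          (hgi.mono_set (uIcc_subset_uIcc_left (by simp [uIcc_of_le hτ, hm0, hm])))
          (fun u hu => hg0 _ (hmem u (Icc_subset_Icc_right hm hu)))
          (fun u hu => hfg _ (hmem u (Icc_subset_Icc_right hm hu)))
    _ ≤ ∫ u in (0 : ℝ)..τ, g (τ - u) :=
        integral_mono_interval le_rfl hm0 hm
          ((ae_restrict_iff' measurableSet_Ioc).2 <| .of_forall fun u hu =>
            hg0 _ (hmem u (Ioc_subset_Icc_self hu)))
          hgi
    _ = ∫ t in (0 : ℝ)..τ, g t := by simp [integral_comp_sub_left]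

end

theorem integral_mul_pow_div_factorial (α τ : ℝ) (k : ℕ) :
    ∫ t in (0 : ℝ)..τ, (α * t) ^ k / k.factorial = α ^ k * τ ^ (k + 1) / (k + 1).factorial := by
  simp only [mul_pow, intervalIntegral.integral_div, intervalIntegral.integral_const_mul,
    integral_pow, Nat.factorial_succ]
  push_cast
  field_simp
  ring

theorem Pk_bound_general (α : ℝ) (hα : 0 < α) (P : ℕ → ℝ → ℝ)
    (hP0 : ∀ τ : ℝ, 0 ≤ τ → P 0 τ = 1)
    (hPneg : ∀ (k : ℕ) (τ : ℝ), τ < 0 → P k τ = 0)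
    (hPrec : ∀ (k : ℕ) (τ : ℝ), 0 ≤ τ →
      P (k + 1) τ = α * ∫ u in (0 : ℝ)..1, P k (τ - u)) :
    ∀ (k : ℕ) (τ : ℝ), 0 ≤ τ → P k τ ≤ (α * τ) ^ k / Nat.factorial k := by
  intro k
  induction k with
  | zero => intro τ hτ; simp [hP0 τ hτ]
  | succ k ih =>
    intro τ hτ
    calc P (k + 1) τ = α * ∫ u in (0 : ℝ)..1, P k (τ - u) := hPrec k τ hτ
      _ ≤ α * ∫ t in (0 : ℝ)..τ, (α * t) ^ k / k.factorial := by
        gcongr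
        exact integral_comp_sub_le_of_eq_zero_of_neg (hPneg k)
          ((by fun_prop : Continuous fun t : ℝ => (α * t) ^ k / k.factorial).intervalIntegrable _ _)
          (fun t ht => by have := ht.1; positivity) (fun t ht => ih t ht.1) zero_le_one hτ
      _ = (α * τ) ^ (k + 1) / (k + 1).factorial := by
        rw [integral_mul_pow_div_factorial, mul_pow, pow_succ]
        ring

theorem Pk_bound (α : ℝ) (hα : 0 < α) (P : ℕ → ℝ → ℝ)
    (hP0 : ∀ τ : ℝ, 0 ≤ τ → P 0 τ = 1)
    (hPneg : ∀ (k : ℕ) (τ : ℝ), τ < 0 → P k τ = 0)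
    (hPnonneg : ∀ (k : ℕ) (τ : ℝ), 0 ≤ P k τ)
    (hPrec : ∀ (k : ℕ) (τ : ℝ), 0 ≤ τ →
      P (k + 1) τ = α * ∫ u in (0 : ℝ)..1, P k (τ - u)) :
    ∀ (k : ℕ) (τ : ℝ), 0 ≤ τ → P k τ ≤ (α * τ) ^ k / Nat.factorial k :=
  Pk_bound_general α hα P hP0 hPneg hPrec
end
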